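/- With respect to the graded symplectic structure ω = dΘ on M(n|m), the graded Poisson bracket of two matrices equals their graded commutator: {M, M'}_{dΘ} = [M, M']_g, and the Hamiltonian graded vector field of M is D_M = ad M. -/

import Mathlib

noncomputable section

/-- The `ℤ₂`-graded algebra `M(n|m)` of complex `(n+m)×(n+m)` matrices. -/
abbrev GMat (n m : ℕ) := Matrix (Fin (n + m)) (Fin (n + m)) ℂ

/-- The "body" matrix algebra `M_{max n m}(ℂ)`. -/
abbrev BMat (n m : ℕ) := Matrix (Fin (max n m)) (Fin (max n m)) ℂ

namespace GMat

/-- Block degree of an index: `false` for the first (size `n`) block. -/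
def bdeg (n m : ℕ) (i : Fin (n + m)) : Bool := decide (n ≤ i.val)

/-- `M` is homogeneous of degree `ε` (block-diagonal for `ε = false`,
block-off-diagonal for `ε = true`). -/
def IsHomog (n m : ℕ) (ε : Bool) (M : GMat n m) : Prop :=
  ∀ i j, Bool.xor (bdeg n m i) (bdeg n m j) ≠ ε → M i j = 0

/-- The Koszul sign `(-1)^{ab}`. -/
def sgn (a b : Bool) : ℂ := if a && b then -1 else 1

/-- Graded commutator of homogeneous elements of degrees `a`, `b`. -/
def gcomm {n m : ℕ} (a b : Bool) (A B : GMat n m) : GMat n m := A * B - sgn a b • (B * A)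

/-- Graded anticommutator of homogeneous elements of degrees `a`, `b`. -/
def gacomm {n m : ℕ} (a b : Bool) (A B : GMat n m) : GMat n m := A * B + sgn a b • (B * A)

/-- The grading matrix `Γ = diag(1_n, -1_m)`. -/
def Gamma (n m : ℕ) : GMat n m := Matrix.diagonal fun i => if bdeg n m i then -1 else 1

/-- `D` is a graded derivation of `M(n|m)` of degree `ε`. -/
def IsGDer (n m : ℕ) (ε : Bool) (D : GMat n m → GMat n m) : Prop :=
  (∀ A B, D (A + B) = D A + D B) ∧
  (∀ (c : ℂ) A, D (c • A) = c • D A) ∧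
  (∀ (a : Bool) M, IsHomog n m a M → IsHomog n m (Bool.xor a ε) (D M)) ∧
  (∀ (a : Bool) (M M' : GMat n m), IsHomog n m a M →
    D (M * M') = D M * M' + sgn ε a • (M * D M'))

/-- The graded adjoint action `ad E` of a homogeneous matrix `E` of degree `a`:
on homogeneous `M` it is the graded commutator `[E,M]_g`. -/
def gad (n m : ℕ) (a : Bool) (E : GMat n m) : GMat n m → GMat n m :=
  fun M => E * M - (if a then Gamma n m * M * Gamma n m * E else M * E)

/-- The supertrace `str M = Tr M₁ - Tr M₄`. -/
def str (n m : ℕ) (M : GMat n m) : ℂ :=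
  ∑ i, (if bdeg n m i then (-1 : ℂ) else 1) * M i i

end GMat



namespace GMat

/-- The canonical graded 1-form `Θ`, determined by `Θ(ad E) = E`.  A graded
1-form is recorded by its values on the homogeneous graded derivations
`ad E` (`E ∈ sl(n|m)` homogeneous of degree `a`). -/
def Theta1 (n m : ℕ) : Bool → GMat n m → GMat n m := fun _ E => E

/-- The Chevalley–Eilenberg exterior differential of an even graded 1-form
`θ`, evaluated on the homogeneous graded derivations `ad E`, `ad F`
(of degrees `a`, `b`):
`dθ(D₀,D₁) = L_{D₀}(θ(D₁)) - (-1)^{ab} L_{D₁}(θ(D₀)) - θ([D₀,D₁])`. -/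
def dOneEven (n m : ℕ) (θ : Bool → GMat n m → GMat n m) :
    Bool → GMat n m → Bool → GMat n m → GMat n m :=
  fun a E b F =>
    gad n m a E (θ b F) - sgn a b • gad n m b F (θ a E) -
      θ (Bool.xor a b) (gcomm a b E F)

/-- The exterior differential of a homogeneous matrix `M` of degree `c`
(a graded 0-form), evaluated on the graded derivation `ad E` of degree `a`:
`dM(D₀) = (-1)^{|D₀||M|} L_{D₀} M`. -/
def dZero (n m : ℕ) (c : Bool) (M : GMat n m) (a : Bool) (E : GMat n m) :
    GMat n m :=
  sgn a c • gad n m a E M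

/-- The supertrace-free representative of `M`, generating the same graded
derivation: `M - (str M / (n-m))·1 ∈ sl(n|m)`. -/
def slpart (n m : ℕ) (M : GMat n m) : GMat n m :=
  M - ((str n m M) / ((n : ℂ) - (m : ℂ))) • (1 : GMat n m)

end GMat

/-
The graded commutator of homogeneous matrices is graded antisymmetric, and for homogeneous `M`
the operator `ad E` acts on it by `[E, M]_g`. Feeding the identity form `Θ` into the
Chevalley–Eilenberg formula then gives `dΘ(ad E, ad N) = [E, N]_g - (-1)^{|E||N|} [N, E]_g - [E, N]_g
= [E, N]_g`, and replacing `M` by its supertrace-free part changes it by a central scalar, which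
no graded commutator sees. Uniqueness of the Hamiltonian field: if `X = N - slpart M` graded
commutes with every elementary matrix `E_lr`, `l ≠ r`, it is a scalar when even (and zero when
odd); a scalar `t • 1` has supertrace `t (n - m)`, so `str X = 0` and `n ≠ m` force `X = 0`.
-/

namespace Matrix

variable {ι α : Type*} [Fintype ι] [DecidableEq ι] [Ring α]

theorem apply_eq_zero_of_single_mul_sub_smul_mul_single {X : Matrix ι ι α} {l r : ι} (s : α)
    (hlr : l ≠ r) (h : single l r 1 * X - s • (X * single l r 1) = 0) : X r l = 0 := by
  simpa [mul_single_apply_of_ne (hbj := hlr)] using congrFun (congrFun h l) l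

end Matrix

namespace GMat

variable {n m : ℕ}

theorem sgn_comm (a b : Bool) : sgn a b = sgn b a := by
  rw [sgn, sgn, Bool.and_comm]

theorem sgn_mul_self (a b : Bool) : sgn a b * sgn a b = 1 := by
  unfold sgn; split <;> norm_num

@[simp]
theorem sgn_false_right (a : Bool) : sgn a false = 1 := by
  simp [sgn]

@[simp]
theorem sgn_false_left (b : Bool) : sgn false b = 1 := by
  simp [sgn]

theorem IsHomog.sub {c : Bool} {A B : GMat n m} (hA : IsHomog n m c A) (hB : IsHomog n m c B) :
    IsHomog n m c (A - B) := fun i j hij => by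
  rw [Matrix.sub_apply, hA i j hij, hB i j hij, sub_zero]

theorem IsHomog.apply_self {A : GMat n m} (hA : IsHomog n m true A) (i : Fin (n + m)) :
    A i i = 0 :=
  hA i i (by simp)

theorem isHomog_single (l r : Fin (n + m)) :
    IsHomog n m (Bool.xor (bdeg n m l) (bdeg n m r)) (Matrix.single l r 1) := by
  intro i j hij
  exact Matrix.single_apply_of_ne _ _ _ _ _ fun ⟨hl, hr⟩ => hij (hl ▸ hr ▸ rfl)

theorem Gamma_mul_mul_Gamma {c : Bool} {M : GMat n m} (hM : IsHomog n m c M) :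
    Gamma n m * M * Gamma n m = (if c then (-1 : ℂ) else 1) • M := by
  ext i j
  rw [Gamma, Matrix.mul_diagonal, Matrix.diagonal_mul, Matrix.smul_apply]
  by_cases hij : Bool.xor (bdeg n m i) (bdeg n m j) = c
  · subst hij
    cases bdeg n m i <;> cases bdeg n m j <;> simp
  · simp [hM i j hij]

theorem gad_eq_gcomm {a c : Bool} (E : GMat n m) {M : GMat n m} (hM : IsHomog n m c M) :
    gad n m a E M = gcomm a c E M := by
  cases a
  · simp [gad, gcomm]
  · cases c <;> simp [gad, gcomm, sgn, Gamma_mul_mul_Gamma hM]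

theorem gcomm_swap (a b : Bool) (A B : GMat n m) :
    gcomm b a B A = -sgn a b • gcomm a b A B := by
  rw [gcomm, gcomm, sgn_comm b a, smul_sub, smul_smul, neg_mul, sgn_mul_self]
  module

theorem gcomm_sub_right (a b : Bool) (E A B : GMat n m) :
    gcomm a b E (A - B) = gcomm a b E A - gcomm a b E B := by
  simp only [gcomm, mul_sub, sub_mul, smul_sub]
  abel

theorem dOneEven_Theta1 {a b : Bool} {E F : GMat n m} (hE : IsHomog n m a E)
    (hF : IsHomog n m b F) : dOneEven n m (Theta1 n m) a E b F = gcomm a b E F := by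
  rw [dOneEven, Theta1, Theta1, Theta1, gad_eq_gcomm E hF, gad_eq_gcomm F hE, gcomm_swap a b E F,
    smul_smul, mul_neg, sgn_mul_self]
  module

theorem str_sub (A B : GMat n m) : str n m (A - B) = str n m A - str n m B := by
  simp [str, mul_sub, Finset.sum_sub_distrib]

theorem str_smul (t : ℂ) (A : GMat n m) : str n m (t • A) = t * str n m A := by
  simp [str, Finset.mul_sum, mul_left_comm]

theorem str_one : str n m (1 : GMat n m) = n - m := by
  simp [str, bdeg, Fin.sum_univ_add, sub_eq_add_neg, fun i : Fin n => not_le.mpr i.isLt]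

theorem str_one_ne_zero (hnm : n ≠ m) : str n m (1 : GMat n m) ≠ 0 := by
  rw [str_one]
  exact sub_ne_zero.mpr (Nat.cast_injective.ne hnm)

theorem str_eq_zero_of_odd {A : GMat n m} (hA : IsHomog n m true A) : str n m A = 0 := by
  simp [str, hA.apply_self]

theorem str_single_of_ne {l r : Fin (n + m)} (hlr : l ≠ r) : str n m (Matrix.single l r 1) = 0 := by
  refine Finset.sum_eq_zero fun i _ => ?_
  have hi : ¬(l = i ∧ r = i) := fun ⟨hl, hr⟩ => hlr (hl.trans hr.symm)
  rw [Matrix.single_apply_of_ne _ _ _ _ _ hi, mul_zero]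

theorem slpart_eq_self_of_odd {M : GMat n m} (hM : IsHomog n m true M) : slpart n m M = M := by
  simp [slpart, str_eq_zero_of_odd hM]

theorem IsHomog.slpart {c : Bool} {M : GMat n m} (hM : IsHomog n m c M) :
    IsHomog n m c (slpart n m M) := by
  cases c
  · intro i j hij
    have hne : i ≠ j := by rintro rfl; simp at hij
    simp [GMat.slpart, hM i j hij, Matrix.one_apply_ne hne]
  · rwa [slpart_eq_self_of_odd hM]

theorem str_slpart (hnm : n ≠ m) (M : GMat n m) : str n m (slpart n m M) = 0 := by
  rw [slpart, str_sub, str_smul, ← str_one, div_mul_cancel₀ _ (str_one_ne_zero hnm), sub_self]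

theorem gcomm_slpart_right (a : Bool) (E : GMat n m) {c : Bool} {M : GMat n m}
    (hM : IsHomog n m c M) : gcomm a c E (slpart n m M) = gcomm a c E M := by
  cases c
  · simp only [gcomm, slpart, sgn_false_right, one_smul, mul_sub, sub_mul, mul_smul_comm,
      smul_mul_assoc, mul_one, one_mul]
    abel
  · rw [slpart_eq_self_of_odd hM]

theorem gcomm_slpart_left (b : Bool) (F : GMat n m) {c : Bool} {M : GMat n m}
    (hM : IsHomog n m c M) : gcomm c b (slpart n m M) F = gcomm c b M F := by
  rw [gcomm_swap b c F, gcomm_slpart_right b F hM, ← gcomm_swap]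

theorem eq_zero_of_forall_gcomm_single_eq_zero (hnm : n ≠ m) {c : Bool} {X : GMat n m}
    (hX : IsHomog n m c X) (hstr : str n m X = 0)
    (h : ∀ l r, l ≠ r → gcomm (Bool.xor (bdeg n m l) (bdeg n m r)) c (Matrix.single l r 1) X = 0) :
    X = 0 := by
  cases c
  · obtain ⟨t, rfl⟩ := Matrix.mem_range_scalar_of_commute_single (M := X) fun l r hlr =>
      sub_eq_zero.mp (by simpa [gcomm] using h l r hlr)
    rw [Matrix.scalar_apply, ← Matrix.smul_one_eq_diagonal, str_smul] at hstr
    simp [(mul_eq_zero.mp hstr).resolve_right (str_one_ne_zero hnm)]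
  · ext r l
    obtain rfl | hrl := eq_or_ne r l
    · exact hX.apply_self r
    · exact Matrix.apply_eq_zero_of_single_mul_sub_smul_mul_single _ hrl.symm (h l r hrl.symm)

end GMat

/-- `ω = dΘ` is a graded symplectic structure on `M(n|m)`: the Hamiltonian
graded vector field of `M` is `D_M = ad M` (with supertrace-free
representative `slpart M`, uniquely), and the induced graded Poisson bracket
is the graded commutator: `{M, M'}_{dΘ} = [M, M']_g`. -/
theorem dTheta_symplectic_poisson (n m : ℕ) (hnm : n ≠ m) :
    (∀ (c : Bool) (M : GMat n m), GMat.IsHomog n m c M →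
      ∀ (a : Bool) (E : GMat n m), GMat.str n m E = 0 → GMat.IsHomog n m a E →
        GMat.dOneEven n m (GMat.Theta1 n m) a E c (GMat.slpart n m M) =
          GMat.gad n m a E M) ∧
    (∀ (c : Bool) (M : GMat n m), GMat.IsHomog n m c M →
      ∀ N : GMat n m, GMat.str n m N = 0 → GMat.IsHomog n m c N →
        (∀ (a : Bool) (E : GMat n m), GMat.str n m E = 0 → GMat.IsHomog n m a E →
          GMat.dOneEven n m (GMat.Theta1 n m) a E c N = GMat.gad n m a E M) →
        N = GMat.slpart n m M) ∧
    (∀ (c c' : Bool) (M M' : GMat n m), GMat.IsHomog n m c M →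
      GMat.IsHomog n m c' M' →
      GMat.dOneEven n m (GMat.Theta1 n m) c (GMat.slpart n m M) c'
        (GMat.slpart n m M') = GMat.gcomm c c' M M') := by
  have hHam (c : Bool) (M : GMat n m) (hM : GMat.IsHomog n m c M) (a : Bool) (E : GMat n m)
      (hE : GMat.IsHomog n m a E) :
      GMat.dOneEven n m (GMat.Theta1 n m) a E c (GMat.slpart n m M) = GMat.gad n m a E M := by
    rw [GMat.dOneEven_Theta1 hE hM.slpart, GMat.gcomm_slpart_right a E hM, GMat.gad_eq_gcomm E hM]
  refine ⟨fun c M hM a E _ hE => hHam c M hM a E hE, ?_, ?_⟩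
  · intro c M hM N hNstr hN hN_Ham
    rw [← sub_eq_zero]
    refine GMat.eq_zero_of_forall_gcomm_single_eq_zero hnm (hN.sub hM.slpart)
      (by rw [GMat.str_sub, hNstr, GMat.str_slpart hnm, sub_self]) fun l r hlr => ?_
    have hlr_Ham := (hN_Ham _ _ (GMat.str_single_of_ne hlr) (GMat.isHomog_single l r)).trans
      (hHam c M hM _ _ (GMat.isHomog_single l r)).symm
    rw [GMat.dOneEven_Theta1 (GMat.isHomog_single l r) hN,
      GMat.dOneEven_Theta1 (GMat.isHomog_single l r) hM.slpart] at hlr_Ham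
    rw [GMat.gcomm_sub_right, hlr_Ham, sub_self]
  · intro c c' M M' hM hM'
    rw [GMat.dOneEven_Theta1 hM.slpart hM'.slpart, GMat.gcomm_slpart_right _ _ hM',
      GMat.gcomm_slpart_left _ _ hM]

end
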